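/- Let Γ be a weighted graph with Markov kernel p, and suppose there exists ε > 0 such that p(x,x)m(x) ≥ ε for all x (assumption (LB)). Let q ∈ (1,2], f ≥ 0 bounded, n ∈ ℕ, u_n = P^n f, and define Ñ_q(g)(x) = q·g(x)·Δg(x) − g(x)^{2-q}·Δ(g^q)(x) and N_q(u_n) = q·u_n·(∂_n+Δ)u_n − u_n^{2-q}·(∂_n+Δ)(u_n^q). Then N_q(P^n f)(x) ≥ 0 for all x, and moreover 0 ≤ Ñ_q(P^n f)(x) ≤ (1−(1−ε)^{q−1})^{−1}·N_q(P^n f)(x). -/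

import Mathlib

private lemma rpow_mul_self' {q : ℝ} {a : ℝ} (ha : 0 ≤ a) (hq : 1 < q) :
    a ^ (q - 1) * a = a ^ q := by
  rcases ha.eq_or_lt with h | h
  · rw [← h, Real.zero_rpow (by linarith), Real.zero_rpow (by linarith), mul_zero]
  · rw [← Real.rpow_add_one h.ne' (q - 1), sub_add_cancel]

private lemma tangent_line {q : ℝ} (hq : 1 < q) {a t : ℝ} (ha : 0 ≤ a) (ht : 0 ≤ t) :
    a ^ q + q * a ^ (q - 1) * (t - a) ≤ t ^ q := by
  rcases ha.eq_or_lt with h | h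
  · rw [← h, Real.zero_rpow (by linarith : q ≠ 0), Real.zero_rpow (by linarith : q - 1 ≠ 0)]
    simpa using Real.rpow_nonneg ht q
  · have hs : -1 ≤ t / a - 1 := by
      have := div_nonneg ht h.le; linarith
    have key := one_add_mul_self_le_rpow_one_add hs hq.le
    have h1 : (1 : ℝ) + (t / a - 1) = t / a := by ring
    rw [h1, Real.div_rpow ht h.le] at key
    have haq : 0 < a ^ q := Real.rpow_pos_of_pos h q
    have key2 := mul_le_mul_of_nonneg_left key haq.le
    have hR : a ^ q * (t ^ q / a ^ q) = t ^ q := by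
      field_simp
    have h2 : a ^ (q - 1) * a = a ^ q := rpow_mul_self' h.le hq
    have hL : a ^ q * (1 + q * (t / a - 1)) = a ^ q + q * a ^ (q - 1) * (t - a) := by
      field_simp
      linear_combination (a * q - q * t) * h2
    rw [hR, hL] at key2
    exact key2


private lemma lemG {q : ℝ} (hq : 1 < q) (hq2 : q ≤ 2) {s lam : ℝ} (hs : -1 ≤ s)
    (h0 : 0 ≤ lam) (h1 : lam ≤ 1) :
    (1 + lam * s) ^ q - 1 - q * (lam * s) ≤ lam ^ q * ((1 + s) ^ q - 1 - q * s) := by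
  rcases h0.eq_or_lt with hl0 | hl0
  · rw [← hl0]
    simp [Real.zero_rpow (by linarith : q ≠ 0), Real.one_rpow]
  rcases h1.eq_or_lt with hl1 | hl1
  · rw [hl1]
    simp [Real.one_rpow]
  -- 0 < lam < 1
  set ψ : ℝ → ℝ := fun x => ((1 + x * s) ^ q - 1 - q * (x * s)) / x ^ q with hψ
  have hq0 : (0:ℝ) < q := by linarith
  have hbase : ∀ x ∈ Set.Ioo lam 1, 0 < 1 + x * s := by
    intro x hx
    rcases le_or_gt s 0 with h | h
    · have : x * s ≥ x * (-1) := by nlinarith [hx.1, hx.2]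
      nlinarith [hx.2]
    · nlinarith [hx.1, hl0]
  have hderiv : ∀ x ∈ Set.Ioo lam 1,
      HasDerivAt ψ (((q * (1 + x * s) ^ (q - 1) * s - q * s) * x ^ q -
        ((1 + x * s) ^ q - 1 - q * (x * s)) * (q * x ^ (q - 1))) / (x ^ q) ^ 2) x := by
    intro x hx
    have hxpos : 0 < x := lt_trans hl0 hx.1
    have hb := hbase x hx
    have hlin : HasDerivAt (fun x : ℝ => 1 + x * s) s x := by
      simpa using ((hasDerivAt_id x).mul_const s).const_add 1
    have hpow : HasDerivAt (fun u : ℝ => u ^ q) (q * (1 + x * s) ^ (q - 1)) (1 + x * s) :=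
      Real.hasDerivAt_rpow_const (Or.inl hb.ne')
    have hnum : HasDerivAt (fun x : ℝ => (1 + x * s) ^ q - 1 - q * (x * s))
        (q * (1 + x * s) ^ (q - 1) * s - q * s) x := by
      have hcomp := hpow.comp x hlin
      have h2 : HasDerivAt (fun x : ℝ => q * (x * s)) (q * s) x := by
        simpa using ((hasDerivAt_id x).mul_const s).const_mul q
      exact (hcomp.sub_const 1).sub h2
    have hden : HasDerivAt (fun x : ℝ => x ^ q) (q * x ^ (q - 1)) x :=
      Real.hasDerivAt_rpow_const (Or.inl hxpos.ne')
    exact hnum.div hden (Real.rpow_pos_of_pos hxpos q).ne'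
  have hderiv_nonneg : ∀ x ∈ Set.Ioo lam 1,
      0 ≤ ((q * (1 + x * s) ^ (q - 1) * s - q * s) * x ^ q -
        ((1 + x * s) ^ q - 1 - q * (x * s)) * (q * x ^ (q - 1))) / (x ^ q) ^ 2 := by
    intro x hx
    have hxpos : 0 < x := lt_trans hl0 hx.1
    have hb := hbase x hx
    set u := x * s with hu
    have hu1 : -1 < u := by linarith
    -- Bernoulli: (1+u)^(q-1) ≤ 1 + (q-1) u
    have hbern : (1 + u) ^ (q - 1) ≤ 1 + (q - 1) * u :=
      rpow_one_add_le_one_add_mul_self hu1.le (by linarith) (by linarith)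
    -- identities
    have hxq : x ^ (q - 1) * x = x ^ q := by
      rw [← Real.rpow_add_one hxpos.ne' (q - 1), sub_add_cancel]
    have huq : (1 + u) ^ (q - 1) * (1 + u) = (1 + u) ^ q := by
      rw [← Real.rpow_add_one hb.ne' (q - 1), sub_add_cancel]
    have hnum_eq : (q * (1 + u) ^ (q - 1) * s - q * s) * x ^ q -
        ((1 + u) ^ q - 1 - q * u) * (q * x ^ (q - 1)) =
        (q * x ^ (q - 1)) * (1 + (q - 1) * u - (1 + u) ^ (q - 1)) := by
      rw [← hxq, ← huq]; ring
    rw [hnum_eq]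
    apply div_nonneg _ (sq_nonneg _)
    apply mul_nonneg (mul_nonneg hq0.le (Real.rpow_nonneg hxpos.le _))
    linarith
  have hcont : ContinuousOn ψ (Set.Icc lam 1) := by
    apply ContinuousOn.div
    · apply ContinuousOn.sub
      apply ContinuousOn.sub
      · exact (Real.continuous_rpow_const hq0.le).comp_continuousOn
          ((continuous_const.add (continuous_id.mul continuous_const)).continuousOn)
      · exact continuousOn_const
      · exact (continuous_const.mul (continuous_id.mul continuous_const)).continuousOn
    · exact (Real.continuous_rpow_const hq0.le).comp_continuousOn continuousOn_id
    · intro x hx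
      exact (Real.rpow_pos_of_pos (lt_of_lt_of_le hl0 hx.1) q).ne'
  have hmono : MonotoneOn ψ (Set.Icc lam 1) := by
    apply monotoneOn_of_deriv_nonneg (convex_Icc lam 1) hcont
    · intro x hx
      rw [interior_Icc] at hx
      exact ((hderiv x hx).differentiableAt.differentiableWithinAt)
    · intro x hx
      rw [interior_Icc] at hx
      rw [(hderiv x hx).deriv]
      exact hderiv_nonneg x hx
  have hle : ψ lam ≤ ψ 1 :=
    hmono (Set.mem_Icc.mpr ⟨le_refl _, hl1.le⟩) (Set.mem_Icc.mpr ⟨hl1.le, le_refl _⟩) hl1.le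
  have hψ1 : ψ 1 = (1 + s) ^ q - 1 - q * s := by
    simp [hψ, Real.one_rpow]
  have hlamq : 0 < lam ^ q := Real.rpow_pos_of_pos hl0 q
  have hψlam : ψ lam = ((1 + lam * s) ^ q - 1 - q * (lam * s)) / lam ^ q := rfl
  rw [hψ1, hψlam, div_le_iff₀ hlamq] at hle
  calc (1 + lam * s) ^ q - 1 - q * (lam * s) ≤ ((1 + s) ^ q - 1 - q * s) * lam ^ q := hle
    _ = lam ^ q * ((1 + s) ^ q - 1 - q * s) := by ring

private lemma lemA {q : ℝ} (hq : 1 < q) (hq2 : q ≤ 2) {a t lam : ℝ} (ha : 0 ≤ a) (ht : 0 ≤ t)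
    (h0 : 0 ≤ lam) (h1 : lam ≤ 1) :
    ((1 - lam) * a + lam * t) ^ q - a ^ q - q * a ^ (q - 1) * (((1 - lam) * a + lam * t) - a)
      ≤ lam ^ q * (t ^ q - a ^ q - q * a ^ (q - 1) * (t - a)) := by
  rcases ha.eq_or_lt with h | h
  · rw [← h, Real.zero_rpow (by linarith : q ≠ 0), Real.zero_rpow (by linarith : q - 1 ≠ 0)]
    have e : ((1 - lam) * 0 + lam * t) = lam * t := by ring
    rw [e]
    have : (lam * t) ^ q = lam ^ q * t ^ q := Real.mul_rpow h0 ht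
    nlinarith [this]
  · set s : ℝ := t / a - 1 with hsdef
    have hts : t / a - 1 = s := rfl
    have hs : -1 ≤ s := by
      have := div_nonneg ht h.le
      rw [← hts]; linarith
    have key := lemG hq hq2 hs h0 h1
    have haq : 0 < a ^ q := Real.rpow_pos_of_pos h q
    have h2 : a ^ (q - 1) * a = a ^ q := rpow_mul_self' h.le hq
    have key2 := mul_le_mul_of_nonneg_left key haq.le
    have hps : (0:ℝ) ≤ 1 + s := by
      have := div_nonneg ht h.le
      rw [← hts]; linarith
    have hpls : (0:ℝ) ≤ 1 + lam * s := by nlinarith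
    have e1 : (1 - lam) * a + lam * t = a * (1 + lam * s) := by
      rw [← hts]; field_simp; ring
    have e2 : t = a * (1 + s) := by rw [← hts]; field_simp; ring
    have E1 : ((1 - lam) * a + lam * t) ^ q = a ^ q * (1 + lam * s) ^ q := by
      rw [e1, Real.mul_rpow h.le hpls]
    have E2 : t ^ q = a ^ q * (1 + s) ^ q := by
      conv_lhs => rw [e2]
      rw [Real.mul_rpow h.le hps]
    have E3 : t - a = a * s := by rw [← hts]; field_simp
    have E4 : ((1 - lam) * a + lam * t) - a = lam * (a * s) := by
      rw [← hts]; field_simp; ring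
    have lhs_eq : ((1 - lam) * a + lam * t) ^ q - a ^ q -
        q * a ^ (q - 1) * (((1 - lam) * a + lam * t) - a)
        = a ^ q * ((1 + lam * s) ^ q - 1 - q * (lam * s)) := by
      rw [E1, E4]; linear_combination (-(q * lam * s)) * h2
    have rhs_eq : lam ^ q * (t ^ q - a ^ q - q * a ^ (q - 1) * (t - a))
        = a ^ q * (lam ^ q * ((1 + s) ^ q - 1 - q * s)) := by
      rw [E2, E3]; linear_combination (-(q * s * lam ^ q)) * h2
    rw [lhs_eq, rhs_eq]
    exact key2

private lemma tsum_tangent {Γ : Type*} {q : ℝ} (hq : 1 < q) {w g : Γ → ℝ}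
    (hw : ∀ y, 0 ≤ w y) (hg : ∀ y, 0 ≤ g y)
    (Sw : Summable w) (Swg : Summable fun y => w y * g y)
    (Swgq : Summable fun y => w y * g y ^ q) {M : ℝ} (hM : 0 ≤ M) :
    (∑' y, w y) * M ^ q + q * M ^ (q - 1) * ((∑' y, w y * g y) - M * (∑' y, w y))
      ≤ ∑' y, w y * g y ^ q := by
  have hpt : ∀ y, (M ^ q - q * M ^ (q - 1) * M) * w y + (q * M ^ (q - 1)) * (w y * g y)
      ≤ w y * g y ^ q := by
    intro y
    have ht := tangent_line hq hM (hg y)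
    calc (M ^ q - q * M ^ (q - 1) * M) * w y + (q * M ^ (q - 1)) * (w y * g y)
        = w y * (M ^ q + q * M ^ (q - 1) * (g y - M)) := by ring
      _ ≤ w y * g y ^ q := mul_le_mul_of_nonneg_left ht (hw y)
  have hS1 : Summable (fun y => (M ^ q - q * M ^ (q - 1) * M) * w y) := Sw.mul_left _
  have hS2 : Summable (fun y => (q * M ^ (q - 1)) * (w y * g y)) := Swg.mul_left _
  have hmain := Summable.tsum_le_tsum hpt (hS1.add hS2) Swgq
  rw [Summable.tsum_add hS1 hS2, tsum_mul_left, tsum_mul_left] at hmain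
  calc (∑' y, w y) * M ^ q + q * M ^ (q - 1) * ((∑' y, w y * g y) - M * (∑' y, w y))
      = (M ^ q - q * M ^ (q - 1) * M) * (∑' y, w y)
        + (q * M ^ (q - 1)) * (∑' y, w y * g y) := by ring
    _ ≤ ∑' y, w y * g y ^ q := hmain

noncomputable def PopOp {Γ : Type*} (p : Γ → Γ → ℝ) (m : Γ → ℝ) (g : Γ → ℝ) (x : Γ) : ℝ :=
  ∑' y, p x y * g y * m y

/-- `Ñ_q(g)(x) = q g(x) Δg(x) − g(x)^{2−q} Δ(g^q)(x)` with `Δ = I − P`. -/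
noncomputable def Ntilde {Γ : Type*} (p : Γ → Γ → ℝ) (m : Γ → ℝ) (q : ℝ) (g : Γ → ℝ)
    (x : Γ) : ℝ :=
  q * g x * (g x - PopOp p m g x) -
    (g x) ^ (2 - q) * ((g x) ^ q - PopOp p m (fun y => (g y) ^ q) x)

/-- `N_q(u_n) = q u_n (∂_n + Δ) u_n − u_n^{2−q} (∂_n + Δ)(u_n^q)` where `u_{n+1} = P u_n`. -/
noncomputable def Nq {Γ : Type*} (p : Γ → Γ → ℝ) (m : Γ → ℝ) (q : ℝ) (g : Γ → ℝ)
    (x : Γ) : ℝ :=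
  q * g x * ((PopOp p m g x - g x) + (g x - PopOp p m g x)) -
    (g x) ^ (2 - q) * (((PopOp p m g x) ^ q - (g x) ^ q) +
      ((g x) ^ q - PopOp p m (fun y => (g y) ^ q) x))

theorem stmt19 {Γ : Type*} [Countable Γ] (m : Γ → ℝ) (hm : ∀ x, 0 < m x)
    (p : Γ → Γ → ℝ) (hp0 : ∀ x y, 0 ≤ p x y) (hsym : ∀ x y, p x y = p y x)
    (hmass : ∀ x, HasSum (fun y => p x y * m y) 1)
    (ε : ℝ) (hε : 0 < ε) (hLB : ∀ x, ε ≤ p x x * m x)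
    (q : ℝ) (hq : 1 < q) (hq2 : q ≤ 2)
    (f : Γ → ℝ) (hf0 : ∀ x, 0 ≤ f x) (B : ℝ) (hfB : ∀ x, f x ≤ B)
    (n : ℕ) (x : Γ) :
    0 ≤ Nq p m q ((PopOp p m)^[n] f) x ∧
    0 ≤ Ntilde p m q ((PopOp p m)^[n] f) x ∧
    Ntilde p m q ((PopOp p m)^[n] f) x ≤
      (1 - (1 - ε) ^ (q - 1))⁻¹ * Nq p m q ((PopOp p m)^[n] f) x := by
  classical
  have hB : 0 ≤ B := le_trans (hf0 x) (hfB x)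
  have hiter : ∀ k y, 0 ≤ (PopOp p m)^[k] f y ∧ (PopOp p m)^[k] f y ≤ B := by
    intro k
    induction k with
    | zero => intro y; simpa using ⟨hf0 y, hfB y⟩
    | succ k ih =>
      intro y
      rw [Function.iterate_succ_apply']
      have hterm : ∀ z, 0 ≤ p y z * ((PopOp p m)^[k] f z) * m z := fun z =>
        mul_nonneg (mul_nonneg (hp0 y z) (ih z).1) (hm z).le
      have hle : ∀ z, p y z * ((PopOp p m)^[k] f z) * m z ≤ p y z * m z * B := by
        intro z
        have h1 := (ih z).2
        have h2 := hp0 y z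
        have h3 := (hm z).le
        have h4 := mul_nonneg (mul_nonneg h2 h3) (sub_nonneg.mpr h1)
        nlinarith [h4]
      have hSb : Summable (fun z => p y z * m z * B) := (hmass y).summable.mul_right B
      have hS : Summable (fun z => p y z * ((PopOp p m)^[k] f z) * m z) :=
        Summable.of_nonneg_of_le hterm hle hSb
      refine ⟨tsum_nonneg hterm, ?_⟩
      calc PopOp p m ((PopOp p m)^[k] f) y = ∑' z, p y z * ((PopOp p m)^[k] f z) * m z := rfl
        _ ≤ ∑' z, p y z * m z * B := Summable.tsum_le_tsum hle hS hSb
        _ = (∑' z, p y z * m z) * B := tsum_mul_right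
        _ = B := by rw [(hmass y).tsum_eq, one_mul]
  set g : Γ → ℝ := (PopOp p m)^[n] f with hgdef
  have hg0 : ∀ y, 0 ≤ g y := fun y => (hiter n y).1
  have hgB : ∀ y, g y ≤ B := fun y => (hiter n y).2
  set w : Γ → ℝ := fun z => p x z * m z with hwdef
  have hw0 : ∀ z, 0 ≤ w z := fun z => mul_nonneg (hp0 x z) (hm z).le
  have hwsum : HasSum w 1 := hmass x
  have Sw : Summable w := hwsum.summable
  have hwt : ∑' z, w z = 1 := hwsum.tsum_eq
  have Swg : Summable (fun z => w z * g z) :=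
    Summable.of_nonneg_of_le (fun z => mul_nonneg (hw0 z) (hg0 z))
      (fun z => mul_le_mul_of_nonneg_left (hgB z) (hw0 z)) (Sw.mul_right B)
  have Swgq : Summable (fun z => w z * g z ^ q) :=
    Summable.of_nonneg_of_le (fun z => mul_nonneg (hw0 z) (Real.rpow_nonneg (hg0 z) q))
      (fun z => mul_le_mul_of_nonneg_left
        (Real.rpow_le_rpow (hg0 z) (hgB z) (by linarith)) (hw0 z)) (Sw.mul_right _)
  have ha0 : 0 ≤ g x := hg0 x
  set Pg : ℝ := ∑' z, w z * g z with hPgdef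
  set Pq : ℝ := ∑' z, w z * g z ^ q with hPqdef
  have hPg0 : 0 ≤ Pg := by
    rw [hPgdef]; exact tsum_nonneg fun z => mul_nonneg (hw0 z) (hg0 z)
  have ePg : PopOp p m g x = Pg := by
    rw [hPgdef]; unfold PopOp
    exact tsum_congr fun z => by simp only [hwdef]; ring
  have ePq : PopOp p m (fun y => g y ^ q) x = Pq := by
    rw [hPqdef]; unfold PopOp
    exact tsum_congr fun z => by simp only [hwdef]; ring
  have key1 := tsum_tangent hq hw0 hg0 Sw Swg Swgq hPg0
  rw [hwt, ← hPgdef, ← hPqdef] at key1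
  have key2 := tsum_tangent hq hw0 hg0 Sw Swg Swgq ha0
  rw [hwt, ← hPgdef, ← hPqdef] at key2
  have hJ1 : Pg ^ q ≤ Pq := by nlinarith [key1]
  have hH0 : 0 ≤ Pq - (g x) ^ q - q * (g x) ^ (q - 1) * (Pg - g x) := by nlinarith [key2]
  have haa : (g x) ^ (2 - q) * (g x) ^ (q - 1) = g x := by
    rcases ha0.eq_or_lt with h | h
    · rw [← h, Real.zero_rpow (by linarith : q - 1 ≠ 0), mul_zero]
    · rw [← Real.rpow_add h, show (2 - q) + (q - 1) = (1:ℝ) by ring, Real.rpow_one]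
  have a2q : 0 ≤ (g x) ^ (2 - q) := Real.rpow_nonneg ha0 _
  have hNq_eq : Nq p m q g x = (g x) ^ (2 - q) * (Pq - Pg ^ q) := by
    unfold Nq; rw [ePg, ePq]; ring
  have hNt_eq : Ntilde p m q g x
      = (g x) ^ (2 - q) * (Pq - (g x) ^ q - q * (g x) ^ (q - 1) * (Pg - g x)) := by
    unfold Ntilde; rw [ePg, ePq]
    linear_combination (q * (Pg - g x)) * haa
  have hwx : w x ≤ 1 := le_hasSum hwsum x fun y _ => hw0 y
  have hεw : ε ≤ w x := by simpa [hwdef] using hLB x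
  have hε1 : ε ≤ 1 := le_trans hεw hwx
  have hKey : Pg ^ q - (g x) ^ q - q * (g x) ^ (q - 1) * (Pg - g x)
      ≤ (1 - ε) ^ (q - 1) * (Pq - (g x) ^ q - q * (g x) ^ (q - 1) * (Pg - g x)) := by
    rcases eq_or_lt_of_le hε1 with hε2 | hε2
    · -- ε = 1
      have hwx1 : w x = 1 := le_antisymm hwx (hε2 ▸ hεw)
      have hzero : ∀ y, y ≠ x → w y = 0 := by
        intro y hy
        have h2 : w x + w y ≤ 1 := by
          have := sum_le_hasSum ({x, y} : Finset Γ) (fun i _ => hw0 i) hwsum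
          rwa [Finset.sum_pair (Ne.symm hy)] at this
        exact le_antisymm (by linarith [hwx1]) (hw0 y)
      have hPga : Pg = g x := by
        rw [hPgdef, tsum_eq_single x (fun y hy => by rw [hzero y hy, zero_mul]), hwx1, one_mul]
      have hPqa : Pq = (g x) ^ q := by
        rw [hPqdef, tsum_eq_single x (fun y hy => by rw [hzero y hy, zero_mul]), hwx1, one_mul]
      rw [hPga, hPqa, ← hε2]
      simp [Real.zero_rpow (show q - 1 ≠ 0 by linarith)]
    · -- ε < 1
      set lam : ℝ := 1 - ε with hlamdef
      have hlam : 0 < lam := by rw [hlamdef]; linarith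
      have hlam1 : lam ≤ 1 := by rw [hlamdef]; linarith
      set μ : Γ → ℝ := fun y => w y - (if y = x then ε else 0) with hμdef
      have hμ0 : ∀ y, 0 ≤ μ y := by
        intro y
        by_cases hyx : y = x
        · subst hyx; have : μ y = w y - ε := by simp [hμdef]
          linarith [hεw, this]
        · have : μ y = w y := by simp [hμdef, hyx]
          linarith [hw0 y, this]
      have hμsum : HasSum μ lam := by
        rw [hμdef, hlamdef]; exact hwsum.sub (hasSum_ite_eq x ε)
      have hμg : HasSum (fun y => μ y * g y) (Pg - ε * g x) := by
        have h1 : HasSum (fun y => w y * g y - (if y = x then ε * g x else 0))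
            (Pg - ε * g x) := by
          rw [hPgdef]; exact Swg.hasSum.sub (hasSum_ite_eq x (ε * g x))
        have h2 : (fun y => μ y * g y)
            = fun y => w y * g y - (if y = x then ε * g x else 0) := by
          funext y
          by_cases hyx : y = x
          · subst hyx; simp [hμdef]; ring
          · simp [hμdef, hyx]
        rw [h2]; exact h1
      have hμq : HasSum (fun y => μ y * g y ^ q) (Pq - ε * (g x) ^ q) := by
        have h1 : HasSum (fun y => w y * g y ^ q - (if y = x then ε * (g x) ^ q else 0))
            (Pq - ε * (g x) ^ q) := by
          rw [hPqdef]; exact Swgq.hasSum.sub (hasSum_ite_eq x (ε * (g x) ^ q))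
        have h2 : (fun y => μ y * g y ^ q)
            = fun y => w y * g y ^ q - (if y = x then ε * (g x) ^ q else 0) := by
          funext y
          by_cases hyx : y = x
          · subst hyx; simp [hμdef]; ring
          · simp [hμdef, hyx]
        rw [h2]; exact h1
      set M : ℝ := (Pg - ε * g x) / lam with hMdef
      have hM0 : 0 ≤ M := by
        apply div_nonneg _ hlam.le
        have h3 : 0 ≤ ∑' y, μ y * g y := tsum_nonneg fun y => mul_nonneg (hμ0 y) (hg0 y)
        rwa [hμg.tsum_eq] at h3
      have hlamM : lam * M = Pg - ε * g x := by
        rw [hMdef]; field_simp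
      have hJ := tsum_tangent hq hμ0 hg0 hμsum.summable hμg.summable hμq.summable hM0
      rw [hμsum.tsum_eq, hμg.tsum_eq, hμq.tsum_eq] at hJ
      have hJ' : lam * M ^ q ≤ Pq - ε * (g x) ^ q := by
        rw [show Pg - ε * g x - M * lam = 0 by rw [← hlamM]; ring] at hJ
        simpa using hJ
      have hA := lemA hq hq2 ha0 hM0 hlam.le hlam1
      have hPgM : (1 - lam) * g x + lam * M = Pg := by
        rw [hlamdef] at hlamM ⊢
        linarith [hlamM]
      rw [hPgM] at hA
      have htangM : 0 ≤ M ^ q - (g x) ^ q - q * (g x) ^ (q - 1) * (M - g x) := by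
        have := tangent_line hq ha0 hM0; linarith
      have hH : lam * (M ^ q - (g x) ^ q - q * (g x) ^ (q - 1) * (M - g x))
          ≤ Pq - (g x) ^ q - q * (g x) ^ (q - 1) * (Pg - g x) := by
        have hPga : Pg - g x = lam * (M - g x) := by
          rw [hlamdef] at hlamM ⊢
          linarith [hlamM]
        rw [hPga, hlamdef] at *
        nlinarith [hJ']
      have hlq : (1 - ε) ^ (q - 1) * lam = lam ^ q := by
        rw [← hlamdef]; exact rpow_mul_self' hlam.le hq
      calc Pg ^ q - (g x) ^ q - q * (g x) ^ (q - 1) * (Pg - g x)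
          ≤ lam ^ q * (M ^ q - (g x) ^ q - q * (g x) ^ (q - 1) * (M - g x)) := hA
        _ = (1 - ε) ^ (q - 1) * (lam * (M ^ q - (g x) ^ q - q * (g x) ^ (q - 1) * (M - g x))) := by
            rw [← hlq]; ring
        _ ≤ (1 - ε) ^ (q - 1) * (Pq - (g x) ^ q - q * (g x) ^ (q - 1) * (Pg - g x)) :=
            mul_le_mul_of_nonneg_left hH (Real.rpow_nonneg (by linarith) _)
  have hc : 0 < 1 - (1 - ε) ^ (q - 1) := by
    have h4 : (1 - ε) ^ (q - 1) < 1 :=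
      Real.rpow_lt_one (by linarith) (by linarith) (by linarith)
    linarith
  refine ⟨?_, ?_, ?_⟩
  · rw [hNq_eq]; exact mul_nonneg a2q (by linarith [hJ1])
  · rw [hNt_eq]; exact mul_nonneg a2q hH0
  · rw [hNq_eq, hNt_eq, inv_mul_eq_div, le_div_iff₀ hc]
    have h5 : 0 ≤ (g x) ^ (2 - q) *
        ((1 - ε) ^ (q - 1) * (Pq - (g x) ^ q - q * (g x) ^ (q - 1) * (Pg - g x))
          - (Pg ^ q - (g x) ^ q - q * (g x) ^ (q - 1) * (Pg - g x))) :=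
      mul_nonneg a2q (by linarith [hKey])
    have hexp : (g x) ^ (2 - q) * (Pq - Pg ^ q)
        - (g x) ^ (2 - q) * (Pq - (g x) ^ q - q * (g x) ^ (q - 1) * (Pg - g x))
          * (1 - (1 - ε) ^ (q - 1))
        = (g x) ^ (2 - q) *
        ((1 - ε) ^ (q - 1) * (Pq - (g x) ^ q - q * (g x) ^ (q - 1) * (Pg - g x))
          - (Pg ^ q - (g x) ^ q - q * (g x) ^ (q - 1) * (Pg - g x))) := by ring
    linarith [h5, hexp]
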